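/- arXiv:1302.3323 — 4 statements merged into one kernel-verified Lean document; each statement's English description precedes it below -/
import Mathlib

section
/- For p > 1, the integral 2∫₀¹ dt/(1-t^p)^{1/p} equals 2π/(p·sin(π/p)). -/
/-!
Substituting `t = u ^ (1/p)` turns `∫₀¹ (1 - t^p)^(-1/p) dt` into `(1/p) B(1/p, 1 - 1/p)`,
and Euler's reflection formula `Γ(a) Γ(1 - a) = π / sin (π a)` evaluates this Beta integral.
-/

open MeasureTheory Set Real

theorem intervalIntegral_comp_rpow_zero_one {E : Type*} [NormedAddCommGroup E] [NormedSpace ℝ E]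
    (g : ℝ → E) {q : ℝ} (hq : 0 < q) :
    ∫ x in (0:ℝ)..1, (q * x ^ (q - 1)) • g (x ^ q) = ∫ y in (0:ℝ)..1, g y := by
  have hIoc (f : ℝ → E) : ∫ x in (0:ℝ)..1, f x = ∫ x in Ioi 0, (Iic 1).indicator f x := by
    rw [intervalIntegral.integral_of_le zero_le_one, setIntegral_indicator measurableSet_Iic,
      Ioi_inter_Iic]
  rw [hIoc, hIoc g, ← integral_comp_rpow_Ioi_of_pos (g := (Iic 1).indicator g) hq]
  refine setIntegral_congr_fun measurableSet_Ioi fun x (hx : 0 < x) => ?_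
  have hle : x ^ q ≤ 1 ↔ x ≤ 1 := by
    simpa using rpow_le_rpow_iff hx.le zero_le_one hq
  by_cases hx1 : x ≤ 1
  · simp [indicator_of_mem, hx1, hle.mpr hx1]
  · simp [indicator_of_notMem, hx1, mt hle.mp hx1]

theorem ofReal_intervalIntegral_rpow_mul_one_sub_rpow (a b : ℝ) :
    ((∫ x in (0:ℝ)..1, x ^ (a - 1) * (1 - x) ^ (b - 1) : ℝ) : ℂ) = Complex.betaIntegral a b := by
  rw [← intervalIntegral.integral_ofReal, Complex.betaIntegral]
  refine intervalIntegral.integral_congr fun x hx => ?_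
  rw [uIcc_of_le zero_le_one] at hx
  simp only [Complex.ofReal_mul, Complex.ofReal_cpow hx.1,
    Complex.ofReal_cpow (sub_nonneg.mpr hx.2)]
  push_cast
  rfl

theorem intervalIntegral_rpow_mul_one_sub_rpow {a b : ℝ} (ha : 0 < a) (hb : 0 < b) :
    ∫ x in (0:ℝ)..1, x ^ (a - 1) * (1 - x) ^ (b - 1) = Gamma a * Gamma b / Gamma (a + b) := by
  rw [← ProbabilityTheory.beta, ProbabilityTheory.beta_eq_betaIntegralReal a b ha hb,
    ← ofReal_intervalIntegral_rpow_mul_one_sub_rpow, Complex.ofReal_re]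

theorem intervalIntegral_rpow_mul_one_sub_rpow_neg {a : ℝ} (ha : 0 < a) (ha1 : a < 1) :
    ∫ x in (0:ℝ)..1, x ^ (a - 1) * (1 - x) ^ (-a) = π / sin (π * a) := by
  have h := intervalIntegral_rpow_mul_one_sub_rpow ha (sub_pos.mpr ha1)
  rw [add_sub_cancel, Gamma_one, div_one, Gamma_mul_Gamma_one_sub, sub_sub_cancel_left] at h
  exact h

/-- For `p > 1`, the generalized π satisfies
`π_p = 2∫₀¹ (1 - t^p)^{-1/p} dt = 2π/(p sin(π/p))`. -/
theorem pi_p_integral (p : ℝ) (hp : 1 < p) :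
    2 * ∫ t in (0:ℝ)..1, (1 - t ^ p) ^ (-(1 / p)) =
      2 * Real.pi / (p * Real.sin (Real.pi / p)) := by
  have hp0 : 0 < p := zero_lt_one.trans hp
  have hsub := intervalIntegral_comp_rpow_zero_one (fun t => (1 - t ^ p) ^ (-(1 / p)))
    (one_div_pos.mpr hp0)
  have hbeta := intervalIntegral_rpow_mul_one_sub_rpow_neg (one_div_pos.mpr hp0)
    ((div_lt_one hp0).mpr hp)
  have hcomp : ∫ x in (0:ℝ)..1, (1 / p * x ^ (1 / p - 1)) • (1 - (x ^ (1 / p)) ^ p) ^ (-(1 / p))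
      = 1 / p * ∫ x in (0:ℝ)..1, x ^ (1 / p - 1) * (1 - x) ^ (-(1 / p)) := by
    rw [← intervalIntegral.integral_const_mul]
    refine intervalIntegral.integral_congr fun x hx => ?_
    rw [uIcc_of_le zero_le_one] at hx
    simp only [smul_eq_mul, one_div, rpow_inv_rpow hx.1 hp0.ne']
    ring
  rw [← hsub, hcomp, hbeta]
  field_simp
end

section
/- If a differentiable function S on an interval satisfies |S(x)|^p + |S'(x)|^p = 1 and S'' exists with S' ≠ 0 at x, then (S')'(x) = -|S(x)/S'(x)|^{p-2} · S(x). -/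
open Real Filter Topology

theorem HasDerivAt.abs_rpow {p : ℝ} (hp : 1 < p) {f : ℝ → ℝ} {f' x : ℝ}
    (hf : HasDerivAt f f' x) :
    HasDerivAt (fun t => |f t| ^ p) (p * |f x| ^ (p - 2) * f x * f') x :=
  (hasDerivAt_abs_rpow (f x) hp).comp x hf

theorem abs_rpow_add_abs_rpow_eq_const_deriv {p : ℝ} (hp : 1 < p) {f g : ℝ → ℝ}
    {f' g' x c : ℝ} (hf : HasDerivAt f f' x) (hg : HasDerivAt g g' x)
    (hc : ∀ᶠ t in 𝓝 x, |f t| ^ p + |g t| ^ p = c) :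
    |f x| ^ (p - 2) * f x * f' + |g x| ^ (p - 2) * g x * g' = 0 := by
  have hsum := (hf.abs_rpow hp).add (hg.abs_rpow hp)
  have hconst : HasDerivAt (fun t => |f t| ^ p + |g t| ^ p) 0 x :=
    (hasDerivAt_const x c).congr_of_eventuallyEq hc
  have hzero := hsum.unique hconst
  have hp0 : p ≠ 0 := by positivity
  apply mul_left_cancel₀ hp0
  linear_combination hzero

/-- Lemma 1.1(a): if `|S|^p + |S'|^p = 1` near `x`, `S` has derivative `S'`
near `x`, `S'` is differentiable at `x` with derivative `S'' x`, and `S' x ≠ 0`,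
then `S'' x = -|S x / S' x|^{p-2} · S x`. -/
theorem deriv_of_Sp_deriv (p : ℝ) (hp : 1 < p) (S S' : ℝ → ℝ) (x : ℝ) (S''x : ℝ)
    (hS : ∀ᶠ t in nhds x, HasDerivAt S (S' t) t)
    (hS' : HasDerivAt S' S''x x)
    (hid : ∀ᶠ t in nhds x, |S t| ^ p + |S' t| ^ p = 1)
    (hne : S' x ≠ 0) :
    S''x = -(|S x / S' x| ^ (p - 2)) * S x := by
  have hderiv := abs_rpow_add_abs_rpow_eq_const_deriv hp hS.self_of_nhds hS' hid
  have hpos : 0 < |S' x| ^ (p - 2) := rpow_pos_of_pos (abs_pos.2 hne) _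
  have hbalance : |S' x| ^ (p - 2) * S''x = -(|S x| ^ (p - 2) * S x) := by
    apply mul_left_cancel₀ hne
    linear_combination hderiv
  rw [abs_div, div_rpow (abs_nonneg _) (abs_nonneg _)]
  field_simp
  linear_combination hbalance
end

section
/- If S is twice differentiable, satisfies |S|^p + |S'|^p = 1, and (S')' = -|S/S'|^{p-2}·S wherever S' ≠ 0, then the derivative of S·(S')^{p-1} equals |S'|^p - (p-1)|S|^p at every point where S' ≠ 0. -/
/-! By the product rule, and since `z ↦ |z|^(p-2) z` has derivative `(p-1)|z|^(p-2)` away from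
`0`, the derivative is `|S'|^(p-2) S'^2 + (p-1) |S'|^(p-2) S S''`. Substituting the ODE for `S''`,
the factors `|S'|^(p-2)` and `|S/S'|^(p-2)` combine to `|S|^(p-2)`, and `|z|^(p-2) z^2 = |z|^p`. -/

open Real

theorem hasDerivAt_abs_rpow_mul_self (a : ℝ) {y : ℝ} (hy : y ≠ 0) :
    HasDerivAt (fun z : ℝ => |z| ^ a * z) ((a + 1) * |y| ^ a) y := by
  have hy' : |y| ≠ 0 := abs_ne_zero.mpr hy
  refine (((hasDerivAt_abs hy).rpow_const (p := a) (.inl hy')).mul (hasDerivAt_id y)).congr_deriv ?_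
  rw [rpow_sub_one hy', id]
  field_simp
  linear_combination a * sign_mul_self y

theorem abs_rpow_sub_two_mul_self_mul_self {p : ℝ} (hp : p ≠ 0) (y : ℝ) :
    |y| ^ (p - 2) * (y * y) = |y| ^ p := by
  rw [← abs_mul_self, abs_mul, ← sq, ← rpow_natCast, Nat.cast_ofNat,
    ← rpow_add' (abs_nonneg y) (by simpa using hp)]
  ring_nf

theorem abs_rpow_mul_abs_div_rpow {a b : ℝ} (hb : b ≠ 0) (r : ℝ) :
    |b| ^ r * |a / b| ^ r = |a| ^ r := by
  rw [← mul_rpow (abs_nonneg b) (abs_nonneg _), ← abs_mul, mul_div_cancel₀ a hb]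

theorem deriv_S_mul_Sp_general (p : ℝ) (hp : 1 < p) (S S' S'' : ℝ → ℝ)
    (hS : ∀ t, HasDerivAt S (S' t) t)
    (hS' : ∀ t, HasDerivAt S' (S'' t) t)
    (hode : ∀ t, S' t ≠ 0 → S'' t = -(|S t / S' t| ^ (p - 2)) * S t) :
    ∀ x, S' x ≠ 0 →
      HasDerivAt (fun t => S t * (|S' t| ^ (p - 2) * S' t))
        (|S' x| ^ p - (p - 1) * |S x| ^ p) x := by
  intro x hx
  have hp0 : p ≠ 0 := by linarith
  have hpow := (hasDerivAt_abs_rpow_mul_self (p - 2) hx).comp x (hS' x)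
  refine ((hS x).mul hpow).congr_deriv ?_
  have hS'p := abs_rpow_sub_two_mul_self_mul_self hp0 (S' x)
  have hSp := abs_rpow_sub_two_mul_self_mul_self hp0 (S x)
  have hquot := abs_rpow_mul_abs_div_rpow (a := S x) hx (p - 2)
  rw [Function.comp_apply, hode x hx]
  linear_combination hS'p - (p - 1) * (S x * S x * hquot + hSp)

/-- Lemma 1.1(b), derivative part: if `S` is twice differentiable, satisfies
`|S|^p + |S'|^p = 1`, and `(S')' = -|S/S'|^{p-2} S` wherever `S' ≠ 0`, then at
every point with `S' x ≠ 0` the function `S · (S')^{p-1} = S·|S'|^{p-2}S'` has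
derivative `|S'|^p - (p-1)|S|^p`. -/
theorem deriv_S_mul_Sp (p : ℝ) (hp : 1 < p) (S S' S'' : ℝ → ℝ)
    (hS : ∀ t, HasDerivAt S (S' t) t)
    (hS' : ∀ t, HasDerivAt S' (S'' t) t)
    (hid : ∀ t, |S t| ^ p + |S' t| ^ p = 1)
    (hode : ∀ t, S' t ≠ 0 → S'' t = -(|S t / S' t| ^ (p - 2)) * S t) :
    ∀ x, S' x ≠ 0 →
      HasDerivAt (fun t => S t * (|S' t| ^ (p - 2) * S' t))
        (|S' x| ^ p - (p - 1) * |S x| ^ p) x :=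
  deriv_S_mul_Sp_general p hp S S' S'' hS hS' hode
end

section
/- If u(x) = c(x)·S_p(λ^{2/p}θ(x)) and u'(x) = λ^{2/p}c(x)·S_p'(λ^{2/p}θ(x)) with u solving -( (u')^{p-1} )' = (p-1)(λ² - q(x) - 2λ r(x)) u^{p-1}, then the Prüfer angle satisfies θ'(x) = 1 - (q(x)/λ²)·S_p^p(λ^{2/p}θ(x)) - (2r(x)/λ)·S_p^p(λ^{2/p}θ(x)) at points where u(x) ≠ 0. -/
/-!
Write `φ(t) = |t|^{p-2} t`, `m = λ^{2/p}` and `s = mθ`. Differentiating `u = c S_p(s)` and comparing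
with the given `u' = m c S_p'(s)` gives `c' S_p(s) = m c S_p'(s) (1 - θ')`. Since `φ` is
multiplicative, `φ(u') = m^{p-1} φ(c) φ(S_p'(s))`; differentiating this with the equation for `S_p`
and equating with the equation for `u`, then multiplying by `S_p(s)` and cancelling `(p-1) φ(c)`,
gives `m^p (|S_p'(s)|^p (1 - θ') - |S_p(s)|^p θ') = -(λ² - q - 2λr) |S_p(s)|^p`. As `m^p = λ²`, the
identity `|S_p|^p + |S_p'|^p = 1` turns this into the formula for `θ'`.
-/

open Real Filter Topology

/-- The odd power `t^{p-1}` of the `p`-Laplacian. -/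
noncomputable def signedPow (p t : ℝ) : ℝ := |t| ^ (p - 2) * t

lemma signedPow_mul (p a b : ℝ) : signedPow p (a * b) = signedPow p a * signedPow p b := by
  simp only [signedPow, abs_mul, mul_rpow (abs_nonneg a) (abs_nonneg b)]
  ring

lemma signedPow_of_pos (p : ℝ) {m : ℝ} (hm : 0 < m) : signedPow p m = m ^ (p - 1) := by
  rw [signedPow, abs_of_pos hm, ← rpow_add_one hm.ne']
  ring_nf

lemma signedPow_ne_zero (p : ℝ) {t : ℝ} (ht : t ≠ 0) : signedPow p t ≠ 0 :=
  mul_ne_zero (rpow_pos_of_pos (abs_pos.2 ht) _).ne' ht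

lemma signedPow_mul_self {p : ℝ} (hp : 0 < p) (t : ℝ) : signedPow p t * t = |t| ^ p := by
  rcases eq_or_ne t 0 with rfl | ht
  · simp [signedPow, zero_rpow hp.ne']
  · rw [signedPow, mul_assoc, ← abs_mul_abs_self, ← mul_assoc, ← rpow_add_one (abs_ne_zero.2 ht),
      ← rpow_add_one (abs_ne_zero.2 ht)]
    ring_nf

lemma hasDerivAt_signedPow (p : ℝ) {t : ℝ} (ht : t ≠ 0) :
    HasDerivAt (signedPow p) ((p - 1) * |t| ^ (p - 2)) t := by
  have h := ((hasDerivAt_abs ht).rpow_const (p := p - 2) (Or.inl (abs_ne_zero.2 ht))).mul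
    (hasDerivAt_id t)
  have hsign : (SignType.sign t : ℝ) * t / |t| = 1 := by
    rw [sign_mul_self, div_self (abs_ne_zero.2 ht)]
  refine h.congr_deriv ?_
  rw [id, rpow_sub_one (abs_ne_zero.2 ht)]
  linear_combination (p - 2) * |t| ^ (p - 2) * hsign

lemma HasDerivAt.of_mul_right {𝕜 : Type*} [NontriviallyNormedField 𝕜] {c g : 𝕜 → 𝕜}
    {x d g' : 𝕜} (hcg : HasDerivAt (fun z => c z * g z) d x) (hg : HasDerivAt g g' x)
    (hgx : g x ≠ 0) : HasDerivAt c ((d - c x * g') / g x) x := by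
  have hev : (fun z => c z * g z / g z) =ᶠ[𝓝 x] c := by
    filter_upwards [hg.continuousAt.eventually_ne hgx] with z hz using mul_div_cancel_right₀ _ hz
  refine ((hcg.div hg hgx).congr_of_eventuallyEq hev.symm).congr_deriv ?_
  field_simp

lemma prufer_phase_eq_of_amplitude_flux {p m K c c' S C θ' : ℝ} (hp : 1 < p) (hm : 0 < m)
    (hc : c ≠ 0) (hid : |S| ^ p + |C| ^ p = 1)
    (hamp : c' * S = m * c * C * (1 - θ'))
    (hflux : m ^ (p - 1) * ((p - 1) * |c| ^ (p - 2) * c' * signedPow p C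
        + signedPow p c * (-((p - 1) * signedPow p S) * (m * θ')))
      = -((p - 1) * K * signedPow p (c * S))) :
    m ^ p * θ' = m ^ p - (m ^ p - K) * |S| ^ p := by
  have hp0 : 0 < p := by linarith
  have hmm : m ^ (p - 1) * m = m ^ p := by rw [← rpow_add_one hm.ne']; ring_nf
  have hc' : |c| ^ (p - 2) * c' * S = signedPow p c * m * C * (1 - θ') := by
    rw [signedPow]; linear_combination |c| ^ (p - 2) * hamp
  have hcancel : (p - 1) * signedPow p c
      * (m ^ p * (|C| ^ p * (1 - θ') - |S| ^ p * θ') + K * |S| ^ p) = 0 := by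
    rw [signedPow_mul] at hflux
    linear_combination S * hflux
      - (p - 1) * m ^ (p - 1) * signedPow p C * hc'
      - (p - 1) * m ^ (p - 1) * m * signedPow p c * (1 - θ') * signedPow_mul_self hp0 C
      + (p - 1) * signedPow p c * (m ^ (p - 1) * m * θ' - K) * signedPow_mul_self hp0 S
      + (p - 1) * signedPow p c * (θ' * |S| ^ p - (1 - θ') * |C| ^ p) * hmm
  have h := (mul_eq_zero.1 hcancel).resolve_left
    (mul_ne_zero (sub_ne_zero.2 hp.ne') (signedPow_ne_zero p hc))
  linear_combination -h + m ^ p * (1 - θ') * hid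

section Prufer

variable {p m : ℝ} {c θ u u' Sp Sp' : ℝ → ℝ} {x : ℝ}

lemma exists_hasDerivAt_prufer_amplitude (hSp : HasDerivAt Sp (Sp' (m * θ x)) (m * θ x))
    (hθ : DifferentiableAt ℝ θ x) (hu : ∀ z, u z = c z * Sp (m * θ z))
    (hu' : HasDerivAt u (u' x) x) (hu'eq : u' x = m * c x * Sp' (m * θ x))
    (hS0 : Sp (m * θ x) ≠ 0) :
    ∃ c', HasDerivAt c c' x ∧ c' * Sp (m * θ x) = m * c x * Sp' (m * θ x) * (1 - deriv θ x) := by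
  have hS := hSp.comp x (hθ.hasDerivAt.const_mul m)
  have hcS : (fun z => c z * Sp (m * θ z)) = u := funext fun z => (hu z).symm
  refine ⟨_, (hcS ▸ hu').of_mul_right hS hS0, ?_⟩
  rw [div_mul_cancel₀ _ hS0, hu'eq]
  ring

lemma prufer_flux_deriv_eq {K c' : ℝ} (hm : 0 < m) (hc : HasDerivAt c c' x) (hc0 : c x ≠ 0)
    (hθ : DifferentiableAt ℝ θ x)
    (hSpode : HasDerivAt (fun s => |Sp' s| ^ (p - 2) * Sp' s)
      (-((p - 1) * |Sp (m * θ x)| ^ (p - 2) * Sp (m * θ x))) (m * θ x))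
    (hu : u x = c x * Sp (m * θ x)) (hu'eq : ∀ z, u' z = m * c z * Sp' (m * θ z))
    (hueq : HasDerivAt (fun t => |u' t| ^ (p - 2) * u' t)
      (-((p - 1) * K * |u x| ^ (p - 2) * u x)) x) :
    m ^ (p - 1) * ((p - 1) * |c x| ^ (p - 2) * c' * signedPow p (Sp' (m * θ x))
        + signedPow p (c x) * (-((p - 1) * signedPow p (Sp (m * θ x))) * (m * deriv θ x)))
      = -((p - 1) * K * signedPow p (c x * Sp (m * θ x))) := by
  have h := (((hasDerivAt_signedPow p hc0).comp x hc).mul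
    (hSpode.comp x (hθ.hasDerivAt.const_mul m))).const_mul (m ^ (p - 1))
  -- `u'` is a positive multiple of `c · S_p'(mθ)`, and `signedPow p` is multiplicative
  have hflux : HasDerivAt (fun z => signedPow p (u' z))
      (m ^ (p - 1) * ((p - 1) * |c x| ^ (p - 2) * c' * signedPow p (Sp' (m * θ x))
        + signedPow p (c x) * (-((p - 1) * signedPow p (Sp (m * θ x))) * (m * deriv θ x)))) x := by
    refine (h.congr_of_eventuallyEq (Eventually.of_forall fun z => ?_)).congr_deriv ?_
    · simp only [Pi.mul_apply, Function.comp_apply, hu'eq z, signedPow_mul, signedPow_of_pos p hm,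
        signedPow.eq_1 p (Sp' _)]
      ring
    · simp only [Function.comp_apply, signedPow]
      ring
  rw [← hu, signedPow.eq_1 p (u x)]
  linear_combination (hueq.unique hflux).symm

end Prufer

/-- The Prüfer angle equation (2.3): if `u = c·S_p(λ^{2/p}θ)` and
`u' = λ^{2/p} c·S_p'(λ^{2/p}θ)` with `u` solving the energy-dependent
p-Laplacian equation, then wherever `u ≠ 0`,
`θ' = 1 - (q/λ²)|S_p|^p - (2r/λ)|S_p|^p`. -/
theorem prufer_angle_equation (p lam : ℝ) (hp : 1 < p) (hlam : 0 < lam)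
    (q r c θ u u' Sp Sp' : ℝ → ℝ)
    (hSp : ∀ t, HasDerivAt Sp (Sp' t) t)
    (hSpode : ∀ t, HasDerivAt (fun s => |Sp' s| ^ (p - 2) * Sp' s)
      (-((p - 1) * |Sp t| ^ (p - 2) * Sp t)) t)
    (hSpid : ∀ t, |Sp t| ^ p + |Sp' t| ^ p = 1)
    (hθ : Differentiable ℝ θ)
    (hu : ∀ x, u x = c x * Sp (lam ^ (2 / p) * θ x))
    (hu' : ∀ x, HasDerivAt u (u' x) x)
    (hu'eq : ∀ x, u' x = lam ^ (2 / p) * c x * Sp' (lam ^ (2 / p) * θ x))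
    (hueq : ∀ x, HasDerivAt (fun t => |u' t| ^ (p - 2) * u' t)
      (-((p - 1) * (lam ^ 2 - q x - 2 * lam * r x) * |u x| ^ (p - 2) * u x)) x) :
    ∀ x, u x ≠ 0 →
      deriv θ x = 1 - (q x / lam ^ 2) * |Sp (lam ^ (2 / p) * θ x)| ^ p
        - (2 * r x / lam) * |Sp (lam ^ (2 / p) * θ x)| ^ p := by
  intro x hx
  set m := lam ^ (2 / p)
  have hm : 0 < m := rpow_pos_of_pos hlam _
  have hmp : m ^ p = lam ^ 2 := by
    rw [← rpow_mul hlam.le, div_mul_cancel₀ _ (by positivity)]; norm_cast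
  have hc0 : c x ≠ 0 := left_ne_zero_of_mul (hu x ▸ hx)
  have hS0 : Sp (m * θ x) ≠ 0 := right_ne_zero_of_mul (hu x ▸ hx)
  obtain ⟨c', hc, hamp⟩ :=
    exists_hasDerivAt_prufer_amplitude (hSp _) (hθ x) hu (hu' x) (hu'eq x) hS0
  have key := prufer_phase_eq_of_amplitude_flux hp hm hc0 (hSpid _) hamp
    (prufer_flux_deriv_eq hm hc hc0 (hθ x) (hSpode _) (hu x) hu'eq (hueq x))
  rw [hmp] at key
  field_simp
  linear_combination key
end
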